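/- arXiv:math/0008066 — 4 statements merged into one kernel-verified Lean document; each statement's English description precedes it below -/
import Mathlib

section
/- Let m = 4k+1 with k ≥ 3 an integer. For integers r with 0 < 2r < m, define σ₁(r) = 4r²/m − 2r + 1, and for m < 2r < 2m define σ₂(r) = 4r²/m − 6r + 2m + 1. Then σ₁((m−1)/2) = σ₂((m+1)/2) = 1/m, and these are the only positive values taken by σ₁ and σ₂ on their respective integer ranges. -/
/-- For `m = 4k+1`, `k ≥ 3`: `σ₁((m−1)/2) = σ₂((m+1)/2) = 1/m`, and these are the only
positive values of `σ₁` on `0 < 2r < m` and of `σ₂` on `m < 2r < 2m`. -/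
theorem stmt_3 (k m : ℤ) (hk : 3 ≤ k) (hm : m = 4 * k + 1)
    (σ₁ σ₂ : ℤ → ℝ)
    (hσ₁ : ∀ r : ℤ, σ₁ r = 4 * (r : ℝ) ^ 2 / (m : ℝ) - 2 * (r : ℝ) + 1)
    (hσ₂ : ∀ r : ℤ, σ₂ r = 4 * (r : ℝ) ^ 2 / (m : ℝ) - 6 * (r : ℝ) + 2 * (m : ℝ) + 1) :
    σ₁ ((m - 1) / 2) = 1 / (m : ℝ) ∧ σ₂ ((m + 1) / 2) = 1 / (m : ℝ) ∧
    (∀ r : ℤ, 0 < 2 * r → 2 * r < m → 0 < σ₁ r → r = (m - 1) / 2) ∧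
    (∀ r : ℤ, m < 2 * r → 2 * r < 2 * m → 0 < σ₂ r → r = (m + 1) / 2) := by
  have hm0 : (0:ℝ) < (m:ℝ) := by
    have : (0:ℤ) < m := by omega
    exact_mod_cast this
  have hmne : (m:ℝ) ≠ 0 := ne_of_gt hm0
  have hmk : (m:ℝ) = 4 * (k:ℝ) + 1 := by exact_mod_cast congrArg (Int.cast : ℤ → ℝ) hm
  have e1 : (m - 1) / 2 = 2 * k := by omega
  have e2 : (m + 1) / 2 = 2 * k + 1 := by omega
  refine ⟨?_, ?_, ?_, ?_⟩
  · rw [e1, hσ₁]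
    push_cast
    rw [hmk]
    field_simp
    ring
  · rw [e2, hσ₂]
    push_cast
    rw [hmk]
    field_simp
    ring
  · intro r h1 h2 h3
    rw [hσ₁ r] at h3
    have h4 : (0:ℝ) < (4 * (r:ℝ)^2 / m - 2 * r + 1) * m := mul_pos h3 hm0
    have h5 : (0:ℝ) < 4 * (r:ℝ)^2 - 2 * r * m + m := by
      have hexp : (4 * (r:ℝ)^2 / m - 2 * r + 1) * m
          = 4 * (r:ℝ)^2 - 2 * r * m + m := by field_simp
      linarith [hexp ▸ h4]
    have h6 : (0:ℤ) < 4 * r^2 - 2 * r * m + m := by exact_mod_cast h5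
    have hr : r = 2 * k := by
      by_contra hne
      have hr1 : 1 ≤ r := by omega
      have hr2 : r ≤ 2 * k - 1 := by omega
      nlinarith [mul_nonneg (by linarith : (0:ℤ) ≤ r - 1)
        (by linarith : (0:ℤ) ≤ 2 * k - 1 - r)]
    omega
  · intro r h1 h2 h3
    rw [hσ₂ r] at h3
    have h4 : (0:ℝ) < (4 * (r:ℝ)^2 / m - 6 * r + 2 * m + 1) * m := mul_pos h3 hm0
    have h5 : (0:ℝ) < 4 * (r:ℝ)^2 - 6 * r * m + 2 * m^2 + m := by
      have hexp : (4 * (r:ℝ)^2 / m - 6 * r + 2 * m + 1) * m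
          = 4 * (r:ℝ)^2 - 6 * r * m + 2 * m^2 + m := by field_simp
      linarith [hexp ▸ h4]
    have h6 : (0:ℤ) < 4 * r^2 - 6 * r * m + 2 * m^2 + m := by exact_mod_cast h5
    have hr : r = 2 * k + 1 := by
      by_contra hne
      have hr1 : 2 * k + 2 ≤ r := by omega
      have hr2 : r ≤ 4 * k := by omega
      nlinarith [mul_nonneg (by linarith : (0:ℤ) ≤ r - (2 * k + 2))
        (by linarith : (0:ℤ) ≤ 4 * k - r)]
    omega
end

section
/- Let m be a prime with m ≡ 1 (mod 4). Then every self-annihilating subgroup H of (ℤ/m)² of order m with respect to the form λ((x₁,x₂),(y₁,y₂)) = c(x₁y₁+x₂y₂), c ≠ 0, is generated by (1,a) where a² ≡ −1 (mod m), and there are exactly two such subgroups. -/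
section Aux

variable {m : ℕ}

lemma aux_msmul (x : ZMod m × ZMod m) : m • x = 0 := by
  ext <;> simp [Prod.smul_def, nsmul_eq_mul, ZMod.natCast_self]

lemma aux_card_closure (hm : m.Prime) (v : ZMod m × ZMod m) (hv : v ≠ 0) :
    Nat.card (AddSubgroup.closure {v}) = m := by
  rw [← AddSubgroup.zmultiples_eq_closure, Nat.card_zmultiples]
  have hdvd : addOrderOf v ∣ m := addOrderOf_dvd_of_nsmul_eq_zero (aux_msmul v)
  rcases (Nat.Prime.eq_one_or_self_of_dvd hm _ hdvd) with h | h
  · exact absurd (AddMonoid.addOrderOf_eq_one_iff.mp h) hv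
  · exact h

lemma aux_mem_closure (v x : ZMod m × ZMod m) (hx : x ∈ AddSubgroup.closure {v}) :
    ∃ n : ℤ, x = ((n : ZMod m) * v.1, (n : ZMod m) * v.2) := by
  rw [← AddSubgroup.zmultiples_eq_closure] at hx
  obtain ⟨n, hn⟩ := AddSubgroup.mem_zmultiples_iff.mp hx
  refine ⟨n, ?_⟩
  rw [← hn]
  ext
  · rw [Prod.smul_fst, zsmul_eq_mul]
  · rw [Prod.smul_snd, zsmul_eq_mul]

lemma aux_smul_mem [NeZero m] (z : ZMod m) (x : ZMod m × ZMod m) (H : AddSubgroup (ZMod m × ZMod m))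
    (hx : x ∈ H) : z • x ∈ H := by
  rw [show z = ((z.val : ℕ) : ZMod m) by simp, Nat.cast_smul_eq_nsmul]
  exact H.nsmul_mem hx z.val

end Aux

/-- For `m` prime, `m ≡ 1 (mod 4)`: every self-annihilating subgroup of `(ℤ/m)²` of order
`m` for the form `c(x₁y₁+x₂y₂)`, `c ≠ 0`, is generated by `(1,a)` with `a² = −1`, and
there are exactly two such subgroups. -/
theorem stmt_9 (m : ℕ) (hm : m.Prime) (hm4 : m % 4 = 1) (c : ZMod m) (hc : c ≠ 0) :
    (∀ H : AddSubgroup (ZMod m × ZMod m), Nat.card H = m →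
      (∀ x ∈ H, ∀ y ∈ H, c * (x.1 * y.1 + x.2 * y.2) = 0) →
      ∃ a : ZMod m, a ^ 2 = -1 ∧ H = AddSubgroup.closure {(1, a)}) ∧
    Nat.card {H : AddSubgroup (ZMod m × ZMod m) //
      Nat.card H = m ∧ ∀ x ∈ H, ∀ y ∈ H, c * (x.1 * y.1 + x.2 * y.2) = 0} = 2 := by
  haveI : Fact m.Prime := ⟨hm⟩
  haveI : NeZero m := ⟨hm.pos.ne'⟩
  have hone : (1 : ZMod m) ≠ 0 := one_ne_zero
  -- Part 1
  have part1 : ∀ H : AddSubgroup (ZMod m × ZMod m), Nat.card H = m →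
      (∀ x ∈ H, ∀ y ∈ H, c * (x.1 * y.1 + x.2 * y.2) = 0) →
      ∃ a : ZMod m, a ^ 2 = -1 ∧ H = AddSubgroup.closure {(1, a)} := by
    intro H hcard hiso
    rcases H.bot_or_exists_ne_zero with hbot | ⟨h, hhH, hh⟩
    · rw [hbot, AddSubgroup.card_bot] at hcard
      have := hm.one_lt
      omega
    · have hself := hiso h hhH h hhH
      have hsum : h.1 * h.1 + h.2 * h.2 = 0 := by
        rcases mul_eq_zero.mp hself with h' | h'
        · exact absurd h' hc
        · exact h'
      have h1 : h.1 ≠ 0 := by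
        intro h1
        apply hh
        rw [h1] at hsum
        simp at hsum
        exact Prod.ext h1 hsum
      set a : ZMod m := h.2 * h.1⁻¹ with ha
      have hsq : a ^ 2 = -1 := by
        have hinv : h.1⁻¹ * h.1 = 1 := ZMod.inv_mul_of_unit h.1 (Ne.isUnit h1)
        have h22 : h.2 * h.2 = -(h.1 * h.1) := by linear_combination hsum
        have he : a ^ 2 = (h.2 * h.2) * (h.1⁻¹ * h.1⁻¹) := by ring
        rw [he, h22]
        linear_combination (-(h.1⁻¹ * h.1 + 1)) * hinv
      refine ⟨a, hsq, ?_⟩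
      -- (1, a) ∈ H
      have hmem : ((1 : ZMod m), a) ∈ H := by
        have : ((1 : ZMod m), a) = h.1⁻¹ • h := by
          have hinv : h.1⁻¹ * h.1 = 1 := ZMod.inv_mul_of_unit h.1 (Ne.isUnit h1)
          ext
          · simpa [Prod.smul_def] using hinv.symm
          · simp [Prod.smul_def, ha]; ring
        rw [this]
        exact aux_smul_mem _ _ _ hhH
      have hle : AddSubgroup.closure {((1 : ZMod m), a)} ≤ H := by
        rw [AddSubgroup.closure_le]
        simpa using hmem
      have hcardc : Nat.card (AddSubgroup.closure {((1 : ZMod m), a)}) = m :=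
        aux_card_closure hm _ (by simp [Prod.ext_iff, hone])
      symm
      apply SetLike.ext'
      apply Set.eq_of_subset_of_ncard_le hle
      have e1 : (H : Set (ZMod m × ZMod m)).ncard = m := hcard
      have e2 : ((AddSubgroup.closure {((1 : ZMod m), a)} : AddSubgroup (ZMod m × ZMod m)) :
          Set (ZMod m × ZMod m)).ncard = m := hcardc
      rw [e1, e2]
  refine ⟨part1, ?_⟩
  -- Part 2
  obtain ⟨i, hi⟩ : ∃ i : ZMod m, i ^ 2 = -1 := by
    obtain ⟨i, hi⟩ := (ZMod.exists_sq_eq_neg_one_iff (p := m)).2 (by omega)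
    exact ⟨i, by rw [sq]; exact hi.symm⟩
  have h2ne : (2 : ZMod m) ≠ 0 := by
    have h : ((2:ℕ) : ZMod m) = (2 : ZMod m) := by norm_num
    rw [← h, Ne, ZMod.natCast_eq_zero_iff]
    intro hd
    have := Nat.le_of_dvd (by norm_num) hd
    have := hm.one_lt
    omega
  have hine : i ≠ -i := by
    intro h
    have : (2 : ZMod m) * i = 0 := by linear_combination h
    rcases mul_eq_zero.mp this with h' | h'
    · exact h2ne h'
    · rw [h'] at hi; simp at hi
  -- the property
  set P : AddSubgroup (ZMod m × ZMod m) → Prop := fun H =>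
    Nat.card H = m ∧ ∀ x ∈ H, ∀ y ∈ H, c * (x.1 * y.1 + x.2 * y.2) = 0 with hP
  have hPa : ∀ a : ZMod m, a ^ 2 = -1 → P (AddSubgroup.closure {((1 : ZMod m), a)}) := by
    intro a ha
    constructor
    · exact aux_card_closure hm _ (by simp [Prod.ext_iff, hone])
    · intro x hx y hy
      obtain ⟨n, hn⟩ := aux_mem_closure _ _ hx
      obtain ⟨k, hk⟩ := aux_mem_closure _ _ hy
      rw [hn, hk]
      simp only
      have : a ^ 2 + 1 = 0 := by rw [ha]; ring
      linear_combination (c * (n : ZMod m) * (k : ZMod m)) * this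
  have hclinj : ∀ a b : ZMod m,
      AddSubgroup.closure {((1 : ZMod m), a)} = AddSubgroup.closure {((1 : ZMod m), b)} →
      a = b := by
    intro a b hab
    have : ((1 : ZMod m), b) ∈ AddSubgroup.closure {((1 : ZMod m), a)} := by
      rw [hab]; exact AddSubgroup.subset_closure rfl
    obtain ⟨n, hn⟩ := aux_mem_closure _ _ this
    simp only at hn
    have h1 : (n : ZMod m) = 1 := by
      have := congrArg Prod.fst hn
      simpa using this.symm
    have := congrArg Prod.snd hn
    simp [h1] at this
    exact this.symm
  have hset : {H : AddSubgroup (ZMod m × ZMod m) | P H} =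
      {AddSubgroup.closure {((1 : ZMod m), i)}, AddSubgroup.closure {((1 : ZMod m), -i)}} := by
    ext H
    constructor
    · rintro ⟨h1, h2⟩
      obtain ⟨a, ha, hHa⟩ := part1 H h1 h2
      have : a = i ∨ a = -i := by
        have : (a - i) * (a + i) = 0 := by linear_combination ha - hi
        rcases mul_eq_zero.mp this with h' | h'
        · left; linear_combination h'
        · right; linear_combination h'
      rcases this with rfl | rfl
      · left; exact hHa
      · right; exact hHa
    · rintro (rfl | rfl)
      · exact hPa i hi
      · exact hPa (-i) (by rw [neg_pow]; simp [hi])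
  have hdist : AddSubgroup.closure {((1 : ZMod m), i)} ≠
      AddSubgroup.closure {((1 : ZMod m), -i)} := fun h => hine (hclinj _ _ h)
  have : Nat.card {H : AddSubgroup (ZMod m × ZMod m) // P H} =
      ({H : AddSubgroup (ZMod m × ZMod m) | P H}).ncard := rfl
  rw [this, hset, Set.ncard_pair hdist]
end

section
/- Let p₁,...,p_N be distinct primes and n₁,...,n_N positive integers. If the polynomial ∏ᵢ (kᵢ t² − (2kᵢ+1)t + kᵢ)^{nᵢ}, where 4kᵢ+1 = pᵢ and the quadratics kᵢt² − (2kᵢ+1)t + kᵢ are irreducible over ℚ, factors as f(t)·f(1/t)·t^{deg f} up to a unit for some f ∈ ℚ[t], then every nᵢ is even. -/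
/-!
Each `twistPoly kᵢ` is a prime of `ℚ[X]` that is its own mirror and does not divide `X`, so it
occurs in `f.reverse` exactly as often as in `f`; hence its multiplicity in `C a · f · f.reverse`
is even. Since the `kᵢ = (pᵢ - 1) / 4` are distinct, the factors are pairwise non-associated, so
that multiplicity is exactly `nᵢ`.
-/

open Polynomial

/-- The Alexander polynomial `k t² − (2k+1) t + k` of the `k`-twisted double of the unknot. -/
noncomputable def twistPoly (k : ℕ) : Polynomial ℚ :=
  C (k : ℚ) * X ^ 2 - C (2 * (k : ℚ) + 1) * X + C (k : ℚ)

namespace Polynomial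

section Mirror

variable {R : Type*} [CommRing R] [NoZeroDivisors R]

theorem mirror_pow (p : R[X]) (m : ℕ) : (p ^ m).mirror = p.mirror ^ m := by
  induction m with
  | zero => simpa using mirror_C (1 : R)
  | succ m ih => rw [pow_succ, mirror_mul_of_domain, ih, pow_succ]

theorem pow_dvd_mirror_of_mirror_eq {q f : R[X]} (hq : q.mirror = q) {m : ℕ} (h : q ^ m ∣ f) :
    q ^ m ∣ f.mirror := by
  obtain ⟨g, rfl⟩ := h
  rw [mirror_mul_of_domain, mirror_pow, hq]
  exact dvd_mul_right _ _

theorem emultiplicity_mirror_of_mirror_eq {q : R[X]} (hq : q.mirror = q) (f : R[X]) :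
    emultiplicity q f.mirror = emultiplicity q f :=
  emultiplicity_eq_emultiplicity_iff.mpr fun _ =>
    ⟨fun h => f.mirror_mirror ▸ pow_dvd_mirror_of_mirror_eq hq h,
      pow_dvd_mirror_of_mirror_eq hq⟩

theorem emultiplicity_reverse_of_mirror_eq {q : R[X]} (hq : Prime q) (hqm : q.mirror = q)
    (hqX : ¬ q ∣ X) (f : R[X]) : emultiplicity q f.reverse = emultiplicity q f := by
  have h := emultiplicity_mirror_of_mirror_eq hqm f
  rwa [mirror, emultiplicity_mul hq, emultiplicity_pow hq, emultiplicity_eq_zero.mpr hqX,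
    mul_zero, add_zero] at h

end Mirror

theorem emultiplicity_C_mul_mul_reverse {K : Type*} [Field K] {q : K[X]} (hq : Prime q)
    (hqm : q.mirror = q) (hqX : ¬ q ∣ X) {a : K} (ha : a ≠ 0) (f : K[X]) :
    emultiplicity q (C a * (f * f.reverse)) = 2 * emultiplicity q f := by
  have hCa : emultiplicity q (C a) = 0 :=
    emultiplicity_eq_zero.mpr fun h =>
      hq.not_isUnit (isUnit_of_dvd_unit h (isUnit_C.mpr ha.isUnit))
  rw [emultiplicity_mul hq, emultiplicity_mul hq, hCa,
    emultiplicity_reverse_of_mirror_eq hq hqm hqX, zero_add, two_mul]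

end Polynomial

theorem emultiplicity_prod_pow_of_not_associated {α ι : Type*} [CommMonoidWithZero α]
    [IsCancelMulZero α] [Fintype ι] {q : ι → α} (hq : ∀ j, Prime (q j)) (i : ι)
    (hassoc : ∀ j, j ≠ i → ¬ Associated (q i) (q j)) (n : ι → ℕ) :
    emultiplicity (q i) (∏ j, q j ^ n j) = n i := by
  rw [Finset.emultiplicity_prod (hq i), Finset.sum_eq_single i]
  · exact emultiplicity_pow_self_of_prime (hq i) _
  · intro j _ hji
    rw [emultiplicity_pow (hq i), emultiplicity_eq_zero.mpr fun h =>
      hassoc j hji ((hq i).associated_of_dvd (hq j) h), mul_zero]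
  · simp

theorem ENat.even_of_natCast_eq_two_mul {n : ℕ} {e : ℕ∞} (h : (n : ℕ∞) = 2 * e) :
    Even n := by
  lift e to ℕ using by rintro rfl; simp at h
  exact ⟨e, by exact_mod_cast h.trans (two_mul _)⟩

section twistPoly

theorem twistPoly_coeff_zero (k : ℕ) : (twistPoly k).coeff 0 = k := by
  simp [twistPoly, coeff_X_pow]

theorem twistPoly_coeff_one (k : ℕ) : (twistPoly k).coeff 1 = -(2 * k + 1) := by
  simp [twistPoly, coeff_X_pow]

theorem twistPoly_coeff_two (k : ℕ) : (twistPoly k).coeff 2 = k := by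
  simp [twistPoly, coeff_X_pow, coeff_one]

variable {k : ℕ}

theorem twistPoly_natDegree (hk : k ≠ 0) : (twistPoly k).natDegree = 2 := by
  unfold twistPoly
  compute_degree!

theorem twistPoly_mirror (hk : k ≠ 0) : (twistPoly k).mirror = twistPoly k := by
  have h0 : (twistPoly k).natTrailingDegree = 0 :=
    natTrailingDegree_eq_zero.mpr (Or.inr (by rw [twistPoly_coeff_zero]; exact_mod_cast hk))
  ext m
  rw [coeff_mirror, twistPoly_natDegree hk, h0]
  rcases Nat.lt_or_ge m 3 with hm | hm
  · interval_cases m <;>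
      simp [revAt, twistPoly_coeff_zero, twistPoly_coeff_one, twistPoly_coeff_two]
  · rw [revAt_eq_self_of_lt (by omega), coeff_eq_zero_of_natDegree_lt]
    rw [twistPoly_natDegree hk]; omega

theorem twistPoly_not_dvd_X (hk : k ≠ 0) : ¬ twistPoly k ∣ X := fun h => by
  have := natDegree_le_of_dvd h X_ne_zero
  rw [twistPoly_natDegree hk, natDegree_X] at this
  omega

/-- Comparing constant and linear coefficients forces the unit to be `1`. -/
theorem twistPoly_associated_iff {k' : ℕ} :
    Associated (twistPoly k) (twistPoly k') ↔ k = k' := by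
  refine ⟨fun ⟨u, hu⟩ => ?_, fun h => h ▸ Associated.refl _⟩
  obtain ⟨c, -, hc⟩ := isUnit_iff.mp u.isUnit
  rw [← hc] at hu
  have h0 := congrArg (coeff · 0) hu
  have h1 := congrArg (coeff · 1) hu
  simp only [coeff_mul_C, twistPoly_coeff_zero, twistPoly_coeff_one] at h0 h1
  have hc1 : c = 1 := by linear_combination -h1 - 2 * h0
  rw [hc1, mul_one] at h0
  exact_mod_cast h0

end twistPoly

theorem stmt_11_general (N : ℕ) (p k n : Fin N → ℕ)
    (hp : ∀ i, (p i).Prime) (hdist : Function.Injective p)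
    (hk : ∀ i, 4 * k i + 1 = p i)
    (hirr : ∀ i, Irreducible (twistPoly (k i)))
    (hfact : ∃ (a : ℚ) (f : Polynomial ℚ), a ≠ 0 ∧
      ∏ i, (twistPoly (k i)) ^ (n i) = C a * (f * f.reverse)) :
    ∀ i, Even (n i) := by
  obtain ⟨a, f, ha, hfac⟩ := hfact
  intro i
  have hk0 : ∀ j, k j ≠ 0 := fun j h0 => (hp j).ne_one (by rw [← hk j, h0])
  have hk_inj : Function.Injective k := fun i j h => hdist (by rw [← hk i, ← hk j, h])
  have hmult := emultiplicity_prod_pow_of_not_associated (q := fun j => twistPoly (k j))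
    (fun j => (hirr j).prime) i
    (fun j hji h => hji (hk_inj (twistPoly_associated_iff.mp h)).symm) n
  rw [hfac, emultiplicity_C_mul_mul_reverse (hirr i).prime (twistPoly_mirror (hk0 i))
    (twistPoly_not_dvd_X (hk0 i)) ha] at hmult
  exact ENat.even_of_natCast_eq_two_mul hmult.symm

/-- If the product `∏ᵢ (kᵢt² − (2kᵢ+1)t + kᵢ)^{nᵢ}` (with `4kᵢ+1 = pᵢ` distinct primes and
each quadratic irreducible over `ℚ`) factors up to a unit as `f(t)·(t^{deg f}·f(1/t))`,
then every `nᵢ` is even. -/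
theorem stmt_11 (N : ℕ) (p k n : Fin N → ℕ)
    (hp : ∀ i, (p i).Prime) (hdist : Function.Injective p)
    (hn : ∀ i, 0 < n i) (hk : ∀ i, 4 * k i + 1 = p i)
    (hirr : ∀ i, Irreducible (twistPoly (k i)))
    (hfact : ∃ (a : ℚ) (f : Polynomial ℚ), a ≠ 0 ∧
      ∏ i, (twistPoly (k i)) ^ (n i) = C a * (f * f.reverse)) :
    ∀ i, Even (n i) :=
  stmt_11_general N p k n hp hdist hk hirr hfact
end

section
/- For m = 4k+1 with k ≥ 3 an integer, define for 0 < 2r < m the quantity σ₁(r) = 4(A(r) − I(r)) where A(r) is the area of the triangle with vertices (0,0), (r,0), (r, 2r/m) and I(r) counts integer points of this triangle with weight 1 for interior points, 1/2 for non-vertex boundary points, and 1/4 for integral vertices other than (0,0). Then σ₁(r) = 4r²/m − 2r + 1. -/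
/-!
Since `0 < 2r/m < 1`, the triangle contains no lattice point above its base, so its lattice
points are the `r + 1` points `(n, 0)` with `0 ≤ n ≤ r`, all on the boundary: there are no
interior ones, `r - 1` boundary ones that are not vertices, and one integral vertex `(r, 0)`
besides the origin. The area `r²/m` follows from Fubini, the vertical slice over `x` being an
interval of length `2x/m`.
-/

open MeasureTheory Set

theorem Int.cast_ne_of_pos_of_lt_one {b : ℝ} (hb₀ : 0 < b) (hb₁ : b < 1) (y : ℤ) :
    (y : ℝ) ≠ b := by
  rintro rfl
  have : 0 < y := Int.cast_pos.1 hb₀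
  have : y < 1 := by exact_mod_cast hb₁
  omega

theorem Int.ncard_Ioo_of_lt {a b : ℤ} (h : a < b) : ((Ioo a b).ncard : ℤ) = b - a - 1 := by
  rw [← Nat.card_coe_set_eq, Nat.card_eq_fintype_card]
  exact Int.card_fintype_Ioo_of_lt _ _ h

def rightTriangle (a b : ℝ) : Set (ℝ × ℝ) := {p | p.1 ∈ Icc 0 a ∧ p.2 ∈ Icc 0 (b / a * p.1)}

section

variable {a b : ℝ}

theorem isClosed_rightTriangle : IsClosed (rightTriangle a b) :=
  ((isClosed_le continuous_const continuous_fst).inter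
      (isClosed_le continuous_fst continuous_const)).inter
    ((isClosed_le continuous_const continuous_snd).inter
      (isClosed_le continuous_snd (continuous_const.mul continuous_fst)))

theorem convex_rightTriangle : Convex ℝ (rightTriangle a b) := by
  rintro ⟨x₁, y₁⟩ ⟨⟨hx₁, hx₁'⟩, hy₁, hy₁'⟩ ⟨x₂, y₂⟩ ⟨⟨hx₂, hx₂'⟩, hy₂, hy₂'⟩ s t hs ht hst
  refine ⟨⟨?_, ?_⟩, ?_, ?_⟩ <;> simp only [Prod.smul_mk, Prod.mk_add_mk, smul_eq_mul] at * <;>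
    nlinarith

theorem convexHull_rightTriangle_vertices (ha : 0 < a) (hb : 0 < b) :
    convexHull ℝ {(0, 0), (a, 0), (a, b)} = rightTriangle a b := by
  refine Subset.antisymm (convexHull_min ?_ convex_rightTriangle) ?_
  · rintro p (rfl | rfl | rfl) <;> simp [rightTriangle, ha.le, hb.le, ha.ne']
  · rintro ⟨x, y⟩ ⟨⟨-, hxa⟩, hy₀, hyx⟩
    dsimp only at hxa hy₀ hyx
    have hxa' : x / a ≤ 1 := (div_le_one ha).2 hxa
    have hyx' : y / b ≤ x / a := by
      rw [div_le_iff₀ hb]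
      linarith [show b / a * x = x / a * b by ring]
    refine mem_convexHull_of_exists_fintype ![1 - x / a, x / a - y / b, y / b]
      ![(0, 0), (a, 0), (a, b)] (fun i ↦ ?_) (by simp [Fin.sum_univ_three]) (fun i ↦ ?_) ?_
    · fin_cases i <;> simp [hxa', hyx', div_nonneg hy₀ hb.le]
    · fin_cases i <;> simp
    · ext <;> simp [Fin.sum_univ_three] <;> field_simp; ring

theorem volume_rightTriangle (ha : 0 < a) (hb : 0 ≤ b) :
    volume (rightTriangle a b) = ENNReal.ofReal (a * b / 2) := by
  have hslice : ∀ x, volume (Prod.mk x ⁻¹' rightTriangle a b) =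
      (Icc 0 a).indicator (fun x ↦ ENNReal.ofReal (b / a * x)) x := by
    intro x
    by_cases hx : x ∈ Icc 0 a
    · have : Prod.mk x ⁻¹' rightTriangle a b = Icc 0 (b / a * x) := by
        ext y
        simp [rightTriangle, hx.1, hx.2]
      rw [indicator_of_mem hx, this, Real.volume_Icc, sub_zero]
    · have : Prod.mk x ⁻¹' rightTriangle a b = ∅ := by
        ext y
        simp only [rightTriangle, mem_preimage, mem_ofPred_eq, hx, false_and,
          mem_empty_iff_false]
      rw [indicator_of_notMem hx, this, measure_empty]
  rw [Measure.volume_eq_prod, Measure.prod_apply isClosed_rightTriangle.measurableSet,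
    lintegral_congr hslice, lintegral_indicator measurableSet_Icc,
    ← ofReal_integral_eq_lintegral_ofReal (Continuous.integrableOn_Icc (by fun_prop))]
  · rw [integral_Icc_eq_integral_Ioc, ← intervalIntegral.integral_of_le ha.le,
      intervalIntegral.integral_const_mul, integral_id]
    congr 1
    field_simp
    ring
  · filter_upwards [ae_restrict_mem measurableSet_Icc] with x hx
    have := hx.1
    positivity

theorem interior_rightTriangle_subset : interior (rightTriangle a b) ⊆ {p | 0 < p.2} := by
  have : interior {p : ℝ × ℝ | 0 ≤ p.2} = {p | 0 < p.2} := by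
    change interior (Prod.snd ⁻¹' Ici 0) = Prod.snd ⁻¹' Ioi 0
    rw [← isOpenMap_snd.preimage_interior_eq_interior_preimage continuous_snd, interior_Ici]
  exact this ▸ interior_mono fun p hp ↦ hp.2.1

theorem snd_eq_zero_of_int_mem_rightTriangle (ha : 0 < a) (hb₀ : 0 ≤ b) (hb₁ : b < 1)
    {x y : ℤ} (h : ((x : ℝ), (y : ℝ)) ∈ rightTriangle a b) : y = 0 := by
  obtain ⟨⟨-, hxa⟩, hy₀, hyx⟩ := h
  have hy₁ : (y : ℝ) < 1 := calc
    (y : ℝ) ≤ b / a * x := hyx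
    _ ≤ b / a * a := by gcongr
    _ < 1 := by rwa [div_mul_cancel₀ b ha.ne']
  have : y < 1 := by exact_mod_cast hy₁
  have : 0 ≤ y := Int.cast_nonneg_iff.1 hy₀
  omega

theorem latticePoints_interior_rightTriangle (ha : 0 < a) (hb₀ : 0 ≤ b) (hb₁ : b < 1) :
    {p : ℤ × ℤ | ((p.1 : ℝ), (p.2 : ℝ)) ∈ interior (rightTriangle a b)} = ∅ := by
  refine eq_empty_iff_forall_notMem.2 fun p hp ↦ ?_
  have hp₂ : (0 : ℝ) < p.2 := interior_rightTriangle_subset hp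
  rw [snd_eq_zero_of_int_mem_rightTriangle ha hb₀ hb₁ (interior_subset hp)] at hp₂
  simp at hp₂

end

section

variable {n : ℤ} {b : ℝ}

theorem int_mem_frontier_rightTriangle_iff (hn : 0 < n) (hb₀ : 0 ≤ b) (hb₁ : b < 1)
    {x y : ℤ} :
    ((x : ℝ), (y : ℝ)) ∈ frontier (rightTriangle n b) ↔ y = 0 ∧ 0 ≤ x ∧ x ≤ n := by
  have hn' : (0 : ℝ) < n := Int.cast_pos.2 hn
  rw [isClosed_rightTriangle.frontier_eq, mem_sdiff]
  constructor
  · rintro ⟨hT, -⟩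
    obtain rfl := snd_eq_zero_of_int_mem_rightTriangle hn' hb₀ hb₁ hT
    obtain ⟨⟨hx₀, hxn⟩, -⟩ := hT
    exact ⟨rfl, Int.cast_nonneg_iff.1 hx₀, Int.cast_le.1 hxn⟩
  · rintro ⟨rfl, hx₀, hxn⟩
    refine ⟨⟨⟨Int.cast_nonneg_iff.2 hx₀, Int.cast_le.2 hxn⟩, Int.cast_zero.symm.le, ?_⟩,
      fun h ↦ ?_⟩
    · simp only [Int.cast_zero]
      positivity
    · simpa using interior_rightTriangle_subset h

theorem latticePoints_frontier_rightTriangle_diff_vertices (hn : 0 < n) (hb₀ : 0 < b)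
    (hb₁ : b < 1) :
    {p : ℤ × ℤ | ((p.1 : ℝ), (p.2 : ℝ)) ∈ frontier (rightTriangle n b) ∧
      ((p.1 : ℝ), (p.2 : ℝ)) ∉ ({(0, 0), ((n : ℝ), 0), ((n : ℝ), b)} : Set (ℝ × ℝ))} =
      (·, 0) '' Ioo 0 n := by
  ext ⟨x, y⟩
  simp only [int_mem_frontier_rightTriangle_iff hn hb₀.le hb₁, mem_insert_iff, Prod.mk.injEq,
    Int.cast_eq_zero, Int.cast_inj, mem_singleton_iff, Int.cast_ne_of_pos_of_lt_one hb₀ hb₁,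
    and_false, or_false, not_or, not_and, mem_ofPred_eq, mem_image, mem_Ioo, ↓existsAndEq,
    true_and]
  omega

theorem latticePoints_rightTriangle_vertices_ne_zero (hn : n ≠ 0) (hb₀ : 0 < b)
    (hb₁ : b < 1) :
    {p : ℤ × ℤ | ((p.1 : ℝ), (p.2 : ℝ)) ∈ ({(0, 0), ((n : ℝ), 0), ((n : ℝ), b)} : Set (ℝ × ℝ)) ∧
      ((p.1 : ℝ), (p.2 : ℝ)) ≠ (0, 0)} = {(n, 0)} := by
  ext ⟨x, y⟩
  simp only [mem_insert_iff, Prod.mk.injEq, Int.cast_eq_zero, Int.cast_inj, mem_singleton_iff,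
    Int.cast_ne_of_pos_of_lt_one hb₀ hb₁, and_false, or_false, ne_eq, not_and, mem_ofPred_eq]
  omega

end

theorem stmt_19_general (m r : ℤ)
    (hr1 : 0 < 2 * r) (hr2 : 2 * r < m) :
    let V : Set (ℝ × ℝ) := {(0, 0), ((r : ℝ), 0), ((r : ℝ), 2 * (r : ℝ) / (m : ℝ))}
    let T : Set (ℝ × ℝ) := convexHull ℝ V
    let A : ℝ := (volume T).toReal
    let I : ℝ :=
      ({p : ℤ × ℤ | ((p.1 : ℝ), (p.2 : ℝ)) ∈ interior T}.ncard : ℝ)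
        + (1 / 2) * ({p : ℤ × ℤ |
            ((p.1 : ℝ), (p.2 : ℝ)) ∈ frontier T ∧ ((p.1 : ℝ), (p.2 : ℝ)) ∉ V}.ncard : ℝ)
        + (1 / 4) * ({p : ℤ × ℤ |
            ((p.1 : ℝ), (p.2 : ℝ)) ∈ V ∧ ((p.1 : ℝ), (p.2 : ℝ)) ≠ (0, 0)}.ncard : ℝ)
    4 * (A - I) = 4 * (r : ℝ) ^ 2 / (m : ℝ) - 2 * (r : ℝ) + 1 := by
  intro V T A I
  have hr : 0 < r := by omega
  have hr' : (0 : ℝ) < r := Int.cast_pos.2 hr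
  have hm : (0 : ℝ) < m := Int.cast_pos.2 (by omega)
  have hb₀ : 0 < 2 * (r : ℝ) / m := by positivity
  have hb₁ : 2 * (r : ℝ) / m < 1 := (div_lt_one hm).2 (by exact_mod_cast hr2)
  have hT : T = rightTriangle r (2 * r / m) := convexHull_rightTriangle_vertices hr' hb₀
  have hA : A = r ^ 2 / m := by
    simp only [A, hT, volume_rightTriangle hr' hb₀.le]
    rw [ENNReal.toReal_ofReal (by positivity)]
    ring
  have hI : I = (r - 1) / 2 + 1 / 4 := by
    have hcard : ((Ioo 0 r).ncard : ℝ) = r - 1 := by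
      have := Int.ncard_Ioo_of_lt hr
      rw [sub_zero] at this
      exact_mod_cast this
    simp only [I, V, hT, latticePoints_interior_rightTriangle hr' hb₀.le hb₁,
      latticePoints_frontier_rightTriangle_diff_vertices hr hb₀ hb₁,
      latticePoints_rightTriangle_vertices_ne_zero hr.ne' hb₀ hb₁, ncard_empty, ncard_singleton,
      ncard_image_of_injective _ (Prod.mk_left_injective (0 : ℤ)), hcard]
    ring
  rw [hA, hI]
  field_simp
  ring

/-- Casson–Gordon lattice-point computation: for `m = 4k+1`, `k ≥ 3`, and `0 < 2r < m`,
`4(A(r) − I(r)) = 4r²/m − 2r + 1`, where `A(r)` is the area of the triangle with vertices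
`(0,0)`, `(r,0)`, `(r,2r/m)` and `I(r)` is the weighted count of its lattice points
(weight 1 for interior points, 1/2 for non-vertex boundary points, 1/4 for integral
vertices other than `(0,0)`). -/
theorem stmt_19 (k m r : ℤ) (hk : 3 ≤ k) (hm : m = 4 * k + 1)
    (hr1 : 0 < 2 * r) (hr2 : 2 * r < m) :
    let V : Set (ℝ × ℝ) := {(0, 0), ((r : ℝ), 0), ((r : ℝ), 2 * (r : ℝ) / (m : ℝ))}
    let T : Set (ℝ × ℝ) := convexHull ℝ V
    let A : ℝ := (volume T).toReal
    let I : ℝ :=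
      ({p : ℤ × ℤ | ((p.1 : ℝ), (p.2 : ℝ)) ∈ interior T}.ncard : ℝ)
        + (1 / 2) * ({p : ℤ × ℤ |
            ((p.1 : ℝ), (p.2 : ℝ)) ∈ frontier T ∧ ((p.1 : ℝ), (p.2 : ℝ)) ∉ V}.ncard : ℝ)
        + (1 / 4) * ({p : ℤ × ℤ |
            ((p.1 : ℝ), (p.2 : ℝ)) ∈ V ∧ ((p.1 : ℝ), (p.2 : ℝ)) ≠ (0, 0)}.ncard : ℝ)
    4 * (A - I) = 4 * (r : ℝ) ^ 2 / (m : ℝ) - 2 * (r : ℝ) + 1 :=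
  stmt_19_general m r hr1 hr2
end
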